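/- arXiv:1804.06867 — 3 statements merged into one kernel-verified Lean document; each statement's English description precedes it below -/
import Mathlib

section
/- For a single additive buyer with item values (v1,v2) drawn from a product distribution D1 × D2 on [0,∞)², and for any deterministic menu (a,b,c) with c > a+b and a ≤ b, at least one of the two additive menus (a,b,a+b) or (c−b,b,c) achieves expected revenue at least Rev(a,b,c). Consequently the supremum revenue over submodular deterministic menus equals the supremum revenue over all deterministic menus. -/
open MeasureTheory

/-- Payment made by a utility-maximizing additive buyer with values `(v1, v2)` facing the
deterministic menu charging `a` for item 1, `b` for item 2, `c` for the pair;
ties are broken in favor of the higher payment. -/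
noncomputable def pay (a b c v1 v2 : ℝ) : ℝ :=
  let u1 := v1 - a
  let u2 := v2 - b
  let u12 := v1 + v2 - c
  let m := max (max 0 u1) (max u2 u12)
  max (if u1 = m then a else 0) (max (if u2 = m then b else 0) (if u12 = m then c else 0))

/-- Expected revenue of the menu `(a, b, c)` when values are drawn from `μ`. -/
noncomputable def rev (μ : Measure (ℝ × ℝ)) (a b c : ℝ) : ℝ :=
  ∫ v, pay a b c v.1 v.2 ∂μ

lemma pay_nonneg (a b c v1 v2 : ℝ) (ha : 0 ≤ a) : 0 ≤ pay a b c v1 v2 := by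
  simp only [pay]
  refine le_max_of_le_left ?_
  split <;> [exact ha; exact le_rfl]

lemma pay_add (a b v1 v2 : ℝ) (ha : 0 ≤ a) (hb : 0 ≤ b) :
    pay a b (a+b) v1 v2 = (if a ≤ v1 then a else 0) + (if b ≤ v2 then b else 0) := by
  simp only [pay]
  set m := max (max 0 (v1 - a)) (max (v2 - b) (v1 + v2 - (a + b))) with hm
  have h0m : (0:ℝ) ≤ m := le_max_of_le_left (le_max_left _ _)
  have h1m : v1 - a ≤ m := le_max_of_le_left (le_max_right _ _)
  have h2m : v2 - b ≤ m := le_max_of_le_right (le_max_left _ _)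
  have h12m : v1 + v2 - (a + b) ≤ m := le_max_of_le_right (le_max_right _ _)
  rcases le_or_gt a v1 with ha1 | ha1 <;> rcases le_or_gt b v2 with hb2 | hb2
  · rw [if_pos ha1, if_pos hb2]
    have hcnd : v1 + v2 - (a + b) = m := le_antisymm h12m (by
      rw [hm]; exact max_le (max_le (by linarith) (by linarith)) (max_le (by linarith) (by linarith)))
    refine le_antisymm (max_le (by split <;> linarith) (max_le (by split <;> linarith) (by split <;> linarith))) ?_
    exact le_max_of_le_right (le_max_of_le_right (le_of_eq (if_pos hcnd).symm))
  · rw [if_pos ha1, if_neg (not_le.mpr hb2)]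
    have hcnd : v1 - a = m := le_antisymm h1m (by
      rw [hm]; exact max_le (max_le (by linarith) (by linarith)) (max_le (by linarith) (by linarith)))
    refine le_antisymm (max_le (by split <;> linarith) (max_le (by split <;> linarith) (by split <;> linarith))) ?_
    exact le_max_of_le_left (by rw [if_pos hcnd]; linarith)
  · rw [if_neg (not_le.mpr ha1), if_pos hb2]
    have hcnd : v2 - b = m := le_antisymm h2m (by
      rw [hm]; exact max_le (max_le (by linarith) (by linarith)) (max_le (by linarith) (by linarith)))
    refine le_antisymm (max_le (by split <;> linarith) (max_le (by split <;> linarith) (by split <;> linarith))) ?_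
    exact le_max_of_le_right (le_max_of_le_left (by rw [if_pos hcnd]; linarith))
  · rw [if_neg (not_le.mpr ha1), if_neg (not_le.mpr hb2)]
    refine le_antisymm (max_le (by split <;> linarith) (max_le (by split <;> linarith) (by split <;> linarith))) ?_
    refine le_max_of_le_left ?_
    split <;> linarith

lemma pay_eq (a b c v1 v2 : ℝ) (ha : 0 ≤ a) (hab : a ≤ b) (hc : a + b < c) :
    pay a b c v1 v2 =
      if c - a ≤ v2 then (if c - b ≤ v1 then c else b)
      else if b ≤ v2 then (if v1 - a ≤ v2 - b then b else if a ≤ v1 then a else 0)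
      else if a ≤ v1 then a else 0 := by
  simp only [pay]
  set m := max (max 0 (v1 - a)) (max (v2 - b) (v1 + v2 - c)) with hm
  have h0m : (0:ℝ) ≤ m := le_max_of_le_left (le_max_left _ _)
  have h1m : v1 - a ≤ m := le_max_of_le_left (le_max_right _ _)
  have h2m : v2 - b ≤ m := le_max_of_le_right (le_max_left _ _)
  have h12m : v1 + v2 - c ≤ m := le_max_of_le_right (le_max_right _ _)
  rcases le_or_gt (c - a) v2 with hA2 | hA2
  · rw [if_pos hA2]
    rcases le_or_gt (c - b) v1 with hA1 | hA1
    · rw [if_pos hA1]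
      have hcnd : v1 + v2 - c = m := le_antisymm h12m (by
        rw [hm]; exact max_le (max_le (by linarith) (by linarith)) (max_le (by linarith) (by linarith)))
      refine le_antisymm (max_le (by split <;> linarith) (max_le (by split <;> linarith) (by split <;> linarith))) ?_
      exact le_max_of_le_right (le_max_of_le_right (le_of_eq (if_pos hcnd).symm))
    · rw [if_neg (not_le.mpr hA1)]
      have hcnd : v2 - b = m := le_antisymm h2m (by
        rw [hm]; exact max_le (max_le (by linarith) (by linarith)) (max_le (by linarith) (by linarith)))
      refine le_antisymm (max_le (by split <;> linarith) (max_le (by split <;> linarith) (by split <;> linarith))) ?_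
      exact le_max_of_le_right (le_max_of_le_left (le_of_eq (if_pos hcnd).symm))
  · rw [if_neg (not_le.mpr hA2)]
    rcases le_or_gt b v2 with hA3 | hA3
    · rw [if_pos hA3]
      rcases le_or_gt (v1 - a) (v2 - b) with hA4 | hA4
      · rw [if_pos hA4]
        have hcnd : v2 - b = m := le_antisymm h2m (by
          rw [hm]; exact max_le (max_le (by linarith) (by linarith)) (max_le (by linarith) (by linarith)))
        refine le_antisymm (max_le (by split <;> linarith) (max_le (by split <;> linarith) (by split <;> linarith))) ?_
        exact le_max_of_le_right (le_max_of_le_left (le_of_eq (if_pos hcnd).symm))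
      · rw [if_neg (not_le.mpr hA4), if_pos (by linarith : a ≤ v1)]
        have hcnd : v1 - a = m := le_antisymm h1m (by
          rw [hm]; exact max_le (max_le (by linarith) (by linarith)) (max_le (by linarith) (by linarith)))
        refine le_antisymm (max_le (by split <;> linarith) (max_le (by split <;> linarith) (by split <;> linarith))) ?_
        exact le_max_of_le_left (le_of_eq (if_pos hcnd).symm)
    · rw [if_neg (not_le.mpr hA3)]
      rcases le_or_gt a v1 with hA5 | hA5
      · rw [if_pos hA5]
        have hcnd : v1 - a = m := le_antisymm h1m (by
          rw [hm]; exact max_le (max_le (by linarith) (by linarith)) (max_le (by linarith) (by linarith)))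
        refine le_antisymm (max_le (by split <;> linarith) (max_le (by split <;> linarith) (by split <;> linarith))) ?_
        exact le_max_of_le_left (le_of_eq (if_pos hcnd).symm)
      · rw [if_neg (not_le.mpr hA5)]
        refine le_antisymm (max_le (by split <;> linarith) (max_le (by split <;> linarith) (by split <;> linarith))) ?_
        refine le_max_of_le_left ?_
        split <;> linarith

lemma pay_le_bound (a b c v1 v2 : ℝ) (ha : 0 ≤ a) (hab : a ≤ b) (hc : a + b < c) :
    pay a b c v1 v2 ≤
      (if c - b ≤ v1 then c - b else 0) * (if c - a ≤ v2 then 1 else 0)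
      + b * (if b ≤ v2 then 1 else 0)
      + (if a ≤ v1 then a else 0) * (if c - a ≤ v2 then 0 else 1) := by
  rw [pay_eq a b c v1 v2 ha hab hc]
  split_ifs <;> linarith

lemma pay_comm (a b c v1 v2 : ℝ) : pay a b c v1 v2 = pay b a c v2 v1 := by
  have key : ∀ x y z : ℝ, max (max 0 x) (max y z) = max (max 0 y) (max x z) := by
    intro x y z; rw [max_assoc, max_assoc, max_left_comm x y]
  simp only [pay]
  rw [add_comm v2 v1, key (v2 - b) (v1 - a) (v1 + v2 - c)]
  exact max_left_comm _ _ _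

lemma rev_zero (μ : Measure (ℝ × ℝ)) : rev μ 0 0 0 = 0 := by
  have h : ∀ v : ℝ × ℝ, pay 0 0 0 v.1 v.2 = 0 := by intro v; simp [pay]
  unfold rev
  rw [integral_congr_ae (Filter.Eventually.of_forall h), integral_zero]

lemma ind_eq (t k : ℝ) : (fun x : ℝ => if t ≤ x then k else 0)
    = Set.indicator (Set.Ici t) (fun _ => k) := by
  funext x; simp [Set.indicator_apply, Set.mem_Ici]

lemma ind_eq' (t : ℝ) : (fun x : ℝ => if t ≤ x then (0:ℝ) else 1)
    = Set.indicator (Set.Iio t) (fun _ => (1:ℝ)) := by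
  funext x
  rcases le_or_gt t x with h | h
  · rw [if_pos h, Set.indicator_of_notMem (by simpa using h)]
  · rw [if_neg (not_le.mpr h), Set.indicator_of_mem (Set.mem_Iio.mpr h)]

lemma ind_int (ν : Measure ℝ) (t k : ℝ) :
    ∫ x, (if t ≤ x then k else 0) ∂ν = (ν (Set.Ici t)).toReal * k := by
  rw [show (fun x : ℝ => if t ≤ x then k else 0) = _ from ind_eq t k,
    integral_indicator_const k measurableSet_Ici, smul_eq_mul]
  rfl

lemma ind_int' (ν : Measure ℝ) (t : ℝ) :
    ∫ x, (if t ≤ x then (0:ℝ) else 1) ∂ν = (ν (Set.Iio t)).toReal := by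
  rw [show (fun x : ℝ => if t ≤ x then (0:ℝ) else 1) = _ from ind_eq' t,
    integral_indicator_const 1 measurableSet_Iio, smul_eq_mul, mul_one]
  rfl

lemma ind_integrable (ν : Measure ℝ) [IsFiniteMeasure ν] (t k : ℝ) :
    Integrable (fun x : ℝ => if t ≤ x then k else 0) ν := by
  rw [ind_eq t k]; exact (integrable_const k).indicator measurableSet_Ici

lemma ind_integrable' (ν : Measure ℝ) [IsFiniteMeasure ν] (t : ℝ) :
    Integrable (fun x : ℝ => if t ≤ x then (0:ℝ) else 1) ν := by
  rw [ind_eq' t]; exact (integrable_const 1).indicator measurableSet_Iio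

lemma toReal_le_one (ν : Measure ℝ) [IsProbabilityMeasure ν] (s : Set ℝ) :
    (ν s).toReal ≤ 1 := by
  simpa using ENNReal.toReal_mono ENNReal.one_ne_top prob_le_one

lemma rev_additive (ν1 ν2 : Measure ℝ) [IsProbabilityMeasure ν1] [IsProbabilityMeasure ν2]
    (a b : ℝ) (ha : 0 ≤ a) (hb : 0 ≤ b) :
    rev (ν1.prod ν2) a b (a + b)
      = a * (ν1 (Set.Ici a)).toReal + b * (ν2 (Set.Ici b)).toReal := by
  unfold rev
  have hI1 : Integrable (fun z : ℝ × ℝ => (if a ≤ z.1 then a else 0) * (1:ℝ)) (ν1.prod ν2) :=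
    (ind_integrable ν1 a a).mul_prod (integrable_const 1)
  have hI2 : Integrable (fun z : ℝ × ℝ => (1:ℝ) * (if b ≤ z.2 then b else 0)) (ν1.prod ν2) :=
    (integrable_const 1).mul_prod (ind_integrable ν2 b b)
  have h : ∀ z : ℝ × ℝ, pay a b (a+b) z.1 z.2 =
      (if a ≤ z.1 then a else 0) * 1 + 1 * (if b ≤ z.2 then b else 0) := by
    intro z; rw [pay_add a b z.1 z.2 ha hb]; ring
  have e1 : (∫ z : ℝ × ℝ, (if a ≤ z.1 then a else 0) * (1:ℝ) ∂(ν1.prod ν2))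
      = (∫ x, (if a ≤ x then a else 0) ∂ν1) * (∫ _y : ℝ, (1:ℝ) ∂ν2) :=
    integral_prod_mul (fun x : ℝ => if a ≤ x then a else 0) (fun _ : ℝ => (1:ℝ))
  have e2 : (∫ z : ℝ × ℝ, (1:ℝ) * (if b ≤ z.2 then b else 0) ∂(ν1.prod ν2))
      = (∫ _x : ℝ, (1:ℝ) ∂ν1) * (∫ y, (if b ≤ y then b else 0) ∂ν2) :=
    integral_prod_mul (fun _ : ℝ => (1:ℝ)) (fun y : ℝ => if b ≤ y then b else 0)
  rw [integral_congr_ae (Filter.Eventually.of_forall h), integral_add hI1 hI2, e1, e2,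
    ind_int, ind_int, integral_const, integral_const]
  simp [mul_comm]

lemma key (ν1 ν2 : Measure ℝ) [IsProbabilityMeasure ν1] [IsProbabilityMeasure ν2]
    (a b c : ℝ) (ha : 0 ≤ a) (hab : a ≤ b) (hc : a + b < c) :
    rev (ν1.prod ν2) a b c ≤ rev (ν1.prod ν2) a b (a + b) ∨
    rev (ν1.prod ν2) a b c ≤ rev (ν1.prod ν2) (c - b) b c := by
  have hb : 0 ≤ b := ha.trans hab
  have hcb : 0 ≤ c - b := by linarith
  set α := (ν1 (Set.Ici a)).toReal with hα
  set β := (ν2 (Set.Ici b)).toReal with hβ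
  set q1 := (ν1 (Set.Ici (c - b))).toReal with hq1
  set q2 := (ν2 (Set.Ici (c - a))).toReal with hq2
  set q2' := (ν2 (Set.Iio (c - a))).toReal with hq2'
  have hRevA : rev (ν1.prod ν2) a b (a + b) = a * α + b * β := rev_additive ν1 ν2 a b ha hb
  have hRevB : rev (ν1.prod ν2) (c - b) b c = (c - b) * q1 + b * β := by
    have h := rev_additive ν1 ν2 (c - b) b hcb hb
    rwa [sub_add_cancel] at h
  have hIA : Integrable (fun z : ℝ × ℝ =>
      (if c - b ≤ z.1 then c - b else 0) * (if c - a ≤ z.2 then (1:ℝ) else 0)) (ν1.prod ν2) :=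
    (ind_integrable ν1 (c-b) (c-b)).mul_prod (ind_integrable ν2 (c-a) 1)
  have hIB : Integrable (fun z : ℝ × ℝ => b * (if b ≤ z.2 then (1:ℝ) else 0)) (ν1.prod ν2) :=
    (integrable_const b).mul_prod (ind_integrable ν2 b 1)
  have hIC : Integrable (fun z : ℝ × ℝ =>
      (if a ≤ z.1 then a else 0) * (if c - a ≤ z.2 then (0:ℝ) else 1)) (ν1.prod ν2) :=
    (ind_integrable ν1 a a).mul_prod (ind_integrable' ν2 (c-a))
  have hIAB : Integrable (fun z : ℝ × ℝ =>
      (if c - b ≤ z.1 then c - b else 0) * (if c - a ≤ z.2 then (1:ℝ) else 0)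
      + b * (if b ≤ z.2 then (1:ℝ) else 0)) (ν1.prod ν2) := hIA.add hIB
  have hgi : Integrable (fun z : ℝ × ℝ =>
      (if c - b ≤ z.1 then c - b else 0) * (if c - a ≤ z.2 then (1:ℝ) else 0)
      + b * (if b ≤ z.2 then (1:ℝ) else 0)
      + (if a ≤ z.1 then a else 0) * (if c - a ≤ z.2 then (0:ℝ) else 1)) (ν1.prod ν2) :=
    hIAB.add hIC
  have hbound : rev (ν1.prod ν2) a b c ≤ (c - b) * q1 * q2 + b * β + a * α * q2' := by
    have hle : rev (ν1.prod ν2) a b c ≤ ∫ z : ℝ × ℝ,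
        ((if c - b ≤ z.1 then c - b else 0) * (if c - a ≤ z.2 then (1:ℝ) else 0)
        + b * (if b ≤ z.2 then (1:ℝ) else 0)
        + (if a ≤ z.1 then a else 0) * (if c - a ≤ z.2 then (0:ℝ) else 1)) ∂(ν1.prod ν2) := by
      refine integral_mono_of_nonneg
        (Filter.Eventually.of_forall fun z => pay_nonneg a b c z.1 z.2 ha) hgi
        (Filter.Eventually.of_forall fun z => ?_)
      exact pay_le_bound a b c z.1 z.2 ha hab hc
    refine hle.trans (le_of_eq ?_)
    have eA : (∫ z : ℝ × ℝ,
        (if c - b ≤ z.1 then c - b else 0) * (if c - a ≤ z.2 then (1:ℝ) else 0) ∂(ν1.prod ν2))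
        = (∫ x, (if c - b ≤ x then c - b else 0) ∂ν1) * (∫ y, (if c - a ≤ y then (1:ℝ) else 0) ∂ν2) :=
      integral_prod_mul (fun x : ℝ => if c - b ≤ x then c - b else 0) (fun y : ℝ => if c - a ≤ y then (1:ℝ) else 0)
    have eB : (∫ z : ℝ × ℝ, b * (if b ≤ z.2 then (1:ℝ) else 0) ∂(ν1.prod ν2))
        = (∫ _x : ℝ, b ∂ν1) * (∫ y, (if b ≤ y then (1:ℝ) else 0) ∂ν2) :=
      integral_prod_mul (fun _ : ℝ => b) (fun y : ℝ => if b ≤ y then (1:ℝ) else 0)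
    have eC : (∫ z : ℝ × ℝ,
        (if a ≤ z.1 then a else 0) * (if c - a ≤ z.2 then (0:ℝ) else 1) ∂(ν1.prod ν2))
        = (∫ x, (if a ≤ x then a else 0) ∂ν1) * (∫ y, (if c - a ≤ y then (0:ℝ) else 1) ∂ν2) :=
      integral_prod_mul (fun x : ℝ => if a ≤ x then a else 0) (fun y : ℝ => if c - a ≤ y then (0:ℝ) else 1)
    rw [integral_add hIAB hIC, integral_add hIA hIB, eA, eB, eC,
      ind_int, ind_int, ind_int, ind_int, ind_int', integral_const]
    simp only [measure_univ, probReal_univ, ENNReal.toReal_one, one_smul]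
    ring
  have hq2sum : q2 + q2' = 1 := by
    have h := measure_add_measure_compl (μ := ν2) (measurableSet_Ici (a := c - a))
    rw [Set.compl_Ici, measure_univ] at h
    rw [hq2, hq2', ← ENNReal.toReal_add (measure_ne_top _ _) (measure_ne_top _ _), h,
      ENNReal.toReal_one]
  have hq2n : 0 ≤ q2 := ENNReal.toReal_nonneg
  have hq2n' : 0 ≤ q2' := ENNReal.toReal_nonneg
  rcases le_total (a * α + b * β) ((c - b) * q1 + b * β) with hcase | hcase
  · right
    rw [hRevB]
    refine hbound.trans ?_
    have h2 := mul_le_mul_of_nonneg_right (show a * α ≤ (c - b) * q1 by linarith) hq2n'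
    calc (c - b) * q1 * q2 + b * β + a * α * q2'
        ≤ (c - b) * q1 * q2 + b * β + (c - b) * q1 * q2' := by linarith
      _ = (c - b) * q1 + b * β := by linear_combination ((c - b) * q1) * hq2sum
  · left
    rw [hRevA]
    refine hbound.trans ?_
    have h2 := mul_le_mul_of_nonneg_right (show (c - b) * q1 ≤ a * α by linarith) hq2n
    calc (c - b) * q1 * q2 + b * β + a * α * q2'
        ≤ a * α * q2 + b * β + a * α * q2' := by linarith
      _ = a * α + b * β := by linear_combination (a * α) * hq2sum

lemma rev_comm (ν1 ν2 : Measure ℝ) [SFinite ν1] [SFinite ν2] (a b c : ℝ) :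
    rev (ν1.prod ν2) a b c = rev (ν2.prod ν1) b a c := by
  unfold rev
  rw [← integral_prod_swap (fun z : ℝ × ℝ => pay b a c z.1 z.2)]
  refine integral_congr_ae (Filter.Eventually.of_forall fun z => ?_)
  simp only [Prod.fst_swap, Prod.snd_swap]
  exact pay_comm a b c z.1 z.2

theorem stmt0 (μ1 μ2 : Measure ℝ) [IsProbabilityMeasure μ1] [IsProbabilityMeasure μ2]
    (h1 : μ1 (Set.Iio 0) = 0) (h2 : μ2 (Set.Iio 0) = 0) :
    (∀ a b c : ℝ, 0 ≤ a → a ≤ b → a + b < c →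
      rev (μ1.prod μ2) a b c ≤ rev (μ1.prod μ2) a b (a + b) ∨
      rev (μ1.prod μ2) a b c ≤ rev (μ1.prod μ2) (c - b) b c) ∧
    sSup {r : ℝ | ∃ a b c : ℝ, 0 ≤ a ∧ 0 ≤ b ∧ max a b ≤ c ∧ c ≤ a + b ∧
        r = rev (μ1.prod μ2) a b c} =
      sSup {r : ℝ | ∃ a b c : ℝ, 0 ≤ a ∧ 0 ≤ b ∧ max a b ≤ c ∧
        r = rev (μ1.prod μ2) a b c} := by
  constructor
  · intro a b c ha hab hc
    exact key μ1 μ2 a b c ha hab hc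
  · set P := μ1.prod μ2 with hP
    set Ssub := {r : ℝ | ∃ a b c : ℝ, 0 ≤ a ∧ 0 ≤ b ∧ max a b ≤ c ∧ c ≤ a + b ∧
        r = rev P a b c} with hSsub
    set Sall := {r : ℝ | ∃ a b c : ℝ, 0 ≤ a ∧ 0 ≤ b ∧ max a b ≤ c ∧
        r = rev P a b c} with hSall
    have hsubset : Ssub ⊆ Sall := by
      rintro r ⟨a, b, c, ha, hb, hmax, _, hr⟩
      exact ⟨a, b, c, ha, hb, hmax, hr⟩
    have h0 : (0:ℝ) ∈ Ssub := by
      refine ⟨0, 0, 0, le_rfl, le_rfl, by simp, by simp, ?_⟩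
      rw [rev_zero]
    have dom : ∀ r ∈ Sall, ∃ r' ∈ Ssub, r ≤ r' := by
      rintro r ⟨a, b, c, ha, hb, hmax, hr⟩
      have hac : a ≤ c := le_trans (le_max_left a b) hmax
      have hbc : b ≤ c := le_trans (le_max_right a b) hmax
      by_cases hsm : c ≤ a + b
      · exact ⟨r, ⟨a, b, c, ha, hb, hmax, hsm, hr⟩, le_rfl⟩
      · push_neg at hsm
        rcases le_total a b with hab | hab
        · rcases key μ1 μ2 a b c ha hab hsm with h | h
          · refine ⟨rev P a b (a + b), ⟨a, b, a + b, ha, hb,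
              max_le (by linarith) (by linarith), le_rfl, rfl⟩, ?_⟩
            rw [hr]; exact h
          · refine ⟨rev P (c - b) b c, ⟨c - b, b, c, by linarith, hb,
              max_le (by linarith) hbc, by linarith, rfl⟩, ?_⟩
            rw [hr]; exact h
        · have hsm' : b + a < c := by linarith
          have hkey := key μ2 μ1 b a c hb hab hsm'
          rw [← rev_comm μ1 μ2 a b c, ← rev_comm μ1 μ2 a b (b + a),
            ← rev_comm μ1 μ2 a (c - a) c] at hkey
          rcases hkey with h | h
          · refine ⟨rev P a b (a + b), ⟨a, b, a + b, ha, hb,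
              max_le (by linarith) (by linarith), le_rfl, rfl⟩, ?_⟩
            rw [hr, add_comm a b]; exact h
          · refine ⟨rev P a (c - a) c, ⟨a, c - a, c, ha, by linarith,
              max_le hac (by linarith), by linarith, rfl⟩, ?_⟩
            rw [hr]; exact h
    by_cases hbdd : BddAbove Sall
    · refine le_antisymm (csSup_le_csSup hbdd ⟨0, h0⟩ hsubset) ?_
      refine csSup_le ⟨0, hsubset h0⟩ fun r hr => ?_
      obtain ⟨r', hr', hle⟩ := dom r hr
      exact hle.trans (le_csSup (hbdd.mono hsubset) hr')
    · have hbdd2 : ¬ BddAbove Ssub := by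
        rintro ⟨M, hM⟩
        refine hbdd ⟨M, fun r hr => ?_⟩
        obtain ⟨r', hr', hle⟩ := dom r hr
        exact hle.trans (hM hr')
      rw [Real.sSup_of_not_bddAbove hbdd, Real.sSup_of_not_bddAbove hbdd2]
end

section
/- For two i.i.d. items with values drawn from F × F, and any deterministic menu (a,b,c) with a < b ≤ c ≤ a+b and c ≤ 2a, the following identity holds: Rev(a,a,c) + Rev(b,b,c) = 2·Rev(a,b,c). Consequently, at least one of the symmetric menus (a,a,c) or (b,b,c) achieves expected revenue at least Rev(a,b,c). -/
open MeasureTheory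

/-! If the bundle costs at most twice each item, the buyer facing `(x, y, c)` buys item 1 exactly
when `x ≤ v₁` and `v₂ < c - x`, item 2 exactly when `y ≤ v₂` and `v₁ < c - y`, and the bundle on the
rest of the half-plane `c ≤ v₁ + v₂`. The two strips cut out of that half-plane are disjoint, so the
payment is `c · 1[c ≤ v₁ + v₂]` plus one term depending only on `x` and one depending only on `y`.
Hence `pay(a, a) + pay(b, b) = pay(a, b) + pay(b, a)` pointwise, and `pay(b, a)` at `(v₁, v₂)` is
`pay(a, b)` at `(v₂, v₁)`, which has the same expectation when the values are exchangeable. -/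

lemma pay_eq_ite_of_le_two_mul {x y c v1 v2 : ℝ} (hxc : x ≤ c) (hyc : y ≤ c)
    (hx : c ≤ 2 * x) (hy : c ≤ 2 * y) :
    pay x y c v1 v2 =
      if x ≤ v1 ∧ v2 < c - x then x
      else if y ≤ v2 ∧ v1 < c - y then y
      else if c ≤ v1 + v2 ∧ c - y ≤ v1 ∧ c - x ≤ v2 then c
      else 0 := by
  unfold pay
  grind [le_max_left, le_max_right]

noncomputable def itemPart (c x v w : ℝ) : ℝ :=
  if w < c - x then (if x ≤ v then x else 0) - (if c ≤ v + w then c else 0) else 0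

lemma pay_eq_bundle_add_itemPart {x y c v1 v2 : ℝ} (hxc : x ≤ c) (hyc : y ≤ c)
    (hx : c ≤ 2 * x) (hy : c ≤ 2 * y) :
    pay x y c v1 v2 =
      (if c ≤ v1 + v2 then c else 0) + itemPart c x v1 v2 + itemPart c y v2 v1 := by
  rw [pay_eq_ite_of_le_two_mul hxc hyc hx hy]
  unfold itemPart
  grind

lemma pay_add_pay_eq_pay_add_pay_swap {a b c v1 v2 : ℝ} (hab : a ≤ b) (hbc : b ≤ c)
    (h2a : c ≤ 2 * a) :
    pay a a c v1 v2 + pay b b c v1 v2 = pay a b c v1 v2 + pay a b c v2 v1 := by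
  have hac : a ≤ c := hab.trans hbc
  have h2b : c ≤ 2 * b := by linarith
  rw [pay_eq_bundle_add_itemPart hac hac h2a h2a, pay_eq_bundle_add_itemPart hbc hbc h2b h2b,
    pay_eq_bundle_add_itemPart hac hbc h2a h2b, pay_eq_bundle_add_itemPart hac hbc h2a h2b,
    add_comm v2 v1]
  ring

lemma abs_pay_le (a b c v1 v2 : ℝ) : |pay a b c v1 v2| ≤ |a| + |b| + |c| := by
  unfold pay
  grind [abs_nonneg, le_abs_self, neg_abs_le]

lemma measurable_pay (a b c : ℝ) : Measurable fun v : ℝ × ℝ => pay a b c v.1 v.2 := by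
  unfold pay
  refine .max ?_ (.max ?_ ?_) <;>
    exact .ite (measurableSet_eq_fun (by fun_prop) (by fun_prop)) measurable_const measurable_const

lemma integrable_pay {ν : Measure (ℝ × ℝ)} [IsFiniteMeasure ν] (a b c : ℝ) :
    Integrable (fun v : ℝ × ℝ => pay a b c v.1 v.2) ν :=
  .of_bound (measurable_pay a b c).aestronglyMeasurable (|a| + |b| + |c|)
    (.of_forall fun v => abs_pay_le a b c v.1 v.2)

lemma rev_add_rev_eq_two_mul_rev {ν : Measure (ℝ × ℝ)} [IsFiniteMeasure ν]
    (hν : ν.map Prod.swap = ν) {a b c : ℝ} (hab : a ≤ b) (hbc : b ≤ c) (h2a : c ≤ 2 * a) :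
    rev ν a a c + rev ν b b c = 2 * rev ν a b c := by
  have hswap : ∫ v, pay a b c v.2 v.1 ∂ν = ∫ v, pay a b c v.1 v.2 ∂ν := by
    conv_rhs => rw [← hν]
    rw [integral_map measurable_swap.aemeasurable (measurable_pay a b c).aestronglyMeasurable]
    rfl
  have hint_swap : Integrable (fun v : ℝ × ℝ => pay a b c v.2 v.1) ν :=
    .of_bound ((measurable_pay a b c).comp measurable_swap).aestronglyMeasurable _
      (.of_forall fun v => abs_pay_le a b c v.2 v.1)
  unfold rev
  rw [← integral_add (integrable_pay a a c) (integrable_pay b b c)]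
  simp_rw [pay_add_pay_eq_pay_add_pay_swap hab hbc h2a]
  rw [integral_add (integrable_pay a b c) hint_swap, hswap]
  ring

theorem stmt9_general (μ : Measure ℝ) [IsProbabilityMeasure μ] (a b c : ℝ) (hab : a < b) (hbc : b ≤ c)
    (h2a : c ≤ 2 * a) :
    rev (μ.prod μ) a a c + rev (μ.prod μ) b b c = 2 * rev (μ.prod μ) a b c ∧
    (rev (μ.prod μ) a b c ≤ rev (μ.prod μ) a a c ∨
      rev (μ.prod μ) a b c ≤ rev (μ.prod μ) b b c) := by
  have hsum := rev_add_rev_eq_two_mul_rev (Measure.prod_swap (μ := μ) (ν := μ)) hab.le hbc h2a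
  refine ⟨hsum, ?_⟩
  by_contra! h
  linarith [h.1, h.2]

theorem stmt9 (μ : Measure ℝ) [IsProbabilityMeasure μ] (hsupp : μ (Set.Iio 0) = 0)
    (a b c : ℝ) (ha : 0 ≤ a) (hab : a < b) (hbc : b ≤ c) (hsub : c ≤ a + b)
    (h2a : c ≤ 2 * a) :
    rev (μ.prod μ) a a c + rev (μ.prod μ) b b c = 2 * rev (μ.prod μ) a b c ∧
    (rev (μ.prod μ) a b c ≤ rev (μ.prod μ) a a c ∨
      rev (μ.prod μ) a b c ≤ rev (μ.prod μ) b b c) :=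
  stmt9_general μ a b c hab hbc h2a
end

section
/- For the symmetric correlated distribution taking value (1/ε², 1/ε²) with probability ε², (1/ε, 0) with probability ε/2, (0, 1/ε) with probability ε/2, and (1,1) with remaining probability (for small ε > 0): the asymmetric menu (1, 1/ε, 1/ε²) achieves revenue at least 5/2 − 3ε, while every symmetric menu (p, p, q) achieves revenue at most 2 + ε. Hence for sufficiently small ε the optimal deterministic revenue strictly exceeds the optimal symmetric deterministic revenue. -/
open MeasureTheory

set_option maxHeartbeats 1000000

lemma pay_le {a b c v1 v2 X : ℝ} (h0 : 0 ≤ X)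
    (h1 : 0 ≤ v1 - a → v2 - b ≤ v1 - a → v1 + v2 - c ≤ v1 - a → a ≤ X)
    (h2 : 0 ≤ v2 - b → v1 - a ≤ v2 - b → v1 + v2 - c ≤ v2 - b → b ≤ X)
    (h3 : 0 ≤ v1 + v2 - c → v1 - a ≤ v1 + v2 - c → v2 - b ≤ v1 + v2 - c → c ≤ X) :
    pay a b c v1 v2 ≤ X := by
  unfold pay
  set m := max (max 0 (v1 - a)) (max (v2 - b) (v1 + v2 - c)) with hm
  have hm0 : 0 ≤ m := le_trans (le_max_left _ _) (le_max_left _ _)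
  have hm1 : v1 - a ≤ m := le_trans (le_max_right _ _) (le_max_left _ _)
  have hm2 : v2 - b ≤ m := le_trans (le_max_left _ _) (le_max_right _ _)
  have hm3 : v1 + v2 - c ≤ m := le_trans (le_max_right _ _) (le_max_right _ _)
  have e1 : (if v1 - a = m then a else 0) ≤ X := by
    split_ifs with t
    · exact h1 (by rw [t]; exact hm0) (by rw [t]; exact hm2) (by rw [t]; exact hm3)
    · exact h0
  have e2 : (if v2 - b = m then b else 0) ≤ X := by
    split_ifs with t
    · exact h2 (by rw [t]; exact hm0) (by rw [t]; exact hm1) (by rw [t]; exact hm3)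
    · exact h0
  have e3 : (if v1 + v2 - c = m then c else 0) ≤ X := by
    split_ifs with t
    · exact h3 (by rw [t]; exact hm0) (by rw [t]; exact hm1) (by rw [t]; exact hm2)
    · exact h0
  exact max_le e1 (max_le e2 e3)

lemma pay_eq_a {a b c v1 v2 : ℝ} (h0 : 0 ≤ v1 - a) (hb : v2 - b < v1 - a)
    (hc : v1 + v2 - c < v1 - a) (ha : 0 ≤ a) : pay a b c v1 v2 = a := by
  unfold pay
  dsimp only
  have hm : max (max 0 (v1 - a)) (max (v2 - b) (v1 + v2 - c)) = v1 - a := by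
    rw [max_eq_right h0, max_eq_left (max_le hb.le hc.le)]
  rw [hm, if_pos rfl, if_neg hb.ne, if_neg hc.ne]
  simp [ha]

lemma pay_eq_b {a b c v1 v2 : ℝ} (h0 : 0 ≤ v2 - b) (hA : v1 - a < v2 - b)
    (hc : v1 + v2 - c < v2 - b) (hb : 0 ≤ b) : pay a b c v1 v2 = b := by
  unfold pay
  dsimp only
  have hm : max (max 0 (v1 - a)) (max (v2 - b) (v1 + v2 - c)) = v2 - b := by
    rw [max_eq_left hc.le, max_eq_right (max_le h0 hA.le)]
  rw [hm, if_pos rfl, if_neg hA.ne, if_neg hc.ne]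
  simp [hb]

lemma pay_eq_c {a b c v1 v2 : ℝ} (h0 : 0 ≤ v1 + v2 - c) (hA : v1 - a < v1 + v2 - c)
    (hB : v2 - b < v1 + v2 - c) (hc : 0 ≤ c) : pay a b c v1 v2 = c := by
  unfold pay
  dsimp only
  have hm : max (max 0 (v1 - a)) (max (v2 - b) (v1 + v2 - c)) = v1 + v2 - c := by
    rw [max_eq_right hB.le, max_eq_right (max_le h0 hA.le)]
  rw [hm, if_pos rfl, if_neg hA.ne, if_neg hB.ne]
  simp [hc]

lemma integrable_smul_dirac (f : ℝ × ℝ → ℝ) (r : ℝ) (x : ℝ × ℝ) :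
    Integrable f (ENNReal.ofReal r • Measure.dirac x) := by
  have hae : f =ᵐ[Measure.dirac x] fun _ => f x := by
    rw [ae_dirac_eq]; exact Filter.eventually_pure.2 rfl
  exact ((integrable_const (f x)).congr hae.symm).smul_measure ENNReal.ofReal_ne_top

lemma integral_smul_dirac (f : ℝ × ℝ → ℝ) {r : ℝ} (hr : 0 ≤ r) (x : ℝ × ℝ) :
    ∫ v, f v ∂(ENNReal.ofReal r • Measure.dirac x) = r * f x := by
  rw [integral_smul_measure, integral_dirac, ENNReal.toReal_ofReal hr, smul_eq_mul]

lemma rev_eq {r1 r2 r3 r4 : ℝ} (h1 : 0 ≤ r1) (h2 : 0 ≤ r2) (h3 : 0 ≤ r3) (h4 : 0 ≤ r4)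
    (x1 x2 x3 x4 : ℝ × ℝ) (a b c : ℝ) :
    rev (ENNReal.ofReal r1 • Measure.dirac x1 + ENNReal.ofReal r2 • Measure.dirac x2 +
      ENNReal.ofReal r3 • Measure.dirac x3 + ENNReal.ofReal r4 • Measure.dirac x4) a b c =
    r1 * pay a b c x1.1 x1.2 + r2 * pay a b c x2.1 x2.2 +
      r3 * pay a b c x3.1 x3.2 + r4 * pay a b c x4.1 x4.2 := by
  set f : ℝ × ℝ → ℝ := fun v => pay a b c v.1 v.2 with hf
  have i1 := integrable_smul_dirac f r1 x1
  have i2 := integrable_smul_dirac f r2 x2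
  have i3 := integrable_smul_dirac f r3 x3
  have i4 := integrable_smul_dirac f r4 x4
  unfold rev
  rw [show (∫ v, pay a b c v.1 v.2 ∂(ENNReal.ofReal r1 • Measure.dirac x1 +
      ENNReal.ofReal r2 • Measure.dirac x2 + ENNReal.ofReal r3 • Measure.dirac x3 +
      ENNReal.ofReal r4 • Measure.dirac x4)) = ∫ v, f v ∂_ from rfl]
  rw [integral_add_measure ((i1.add_measure i2).add_measure i3) i4,
    integral_add_measure (i1.add_measure i2) i3, integral_add_measure i1 i2,
    integral_smul_dirac f h1, integral_smul_dirac f h2, integral_smul_dirac f h3,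
    integral_smul_dirac f h4]

theorem stmt15 (ε : ℝ) (hε : 0 < ε) (hε' : ε < 1 / 100) :
    let μ : Measure (ℝ × ℝ) :=
      ENNReal.ofReal (ε ^ 2) • Measure.dirac (1 / ε ^ 2, 1 / ε ^ 2) +
      ENNReal.ofReal (ε / 2) • Measure.dirac (1 / ε, (0 : ℝ)) +
      ENNReal.ofReal (ε / 2) • Measure.dirac ((0 : ℝ), 1 / ε) +
      ENNReal.ofReal (1 - ε ^ 2 - ε) • Measure.dirac ((1 : ℝ), (1 : ℝ))
    (5 / 2 - 3 * ε ≤ rev μ 1 (1 / ε) (1 / ε ^ 2)) ∧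
    (∀ p q : ℝ, 0 ≤ p → p ≤ q → rev μ p p q ≤ 2 + ε) ∧
    sSup {r : ℝ | ∃ p q : ℝ, 0 ≤ p ∧ p ≤ q ∧ r = rev μ p p q} <
      sSup {r : ℝ | ∃ a b c : ℝ, 0 ≤ a ∧ 0 ≤ b ∧ max a b ≤ c ∧ r = rev μ a b c} := by
  intro μ
  -- basic numeric facts
  have hε1 : ε < 1 := by linarith
  have hs : (1 : ℝ) < 1 / ε := one_lt_one_div hε hε1
  have hs100 : (100 : ℝ) < 1 / ε := by
    rw [lt_div_iff₀ hε]; linarith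
  have hsq : 1 / ε ^ 2 = (1 / ε) * (1 / ε) := by ring
  have hq1 : (1 : ℝ) < 1 / ε ^ 2 := by rw [hsq]; nlinarith
  have hqs : 1 / ε < 1 / ε ^ 2 := by rw [hsq]; nlinarith
  have hq2 : (2 : ℝ) < 1 / ε ^ 2 := by rw [hsq]; nlinarith
  have hse : ε * (1 / ε) = 1 := by field_simp
  have hse2 : ε ^ 2 * (1 / ε ^ 2) = 1 := by field_simp
  have hhalf : ε / 2 * (1 / ε) = 1 / 2 := by
    field_simp
  -- weights are nonnegative
  have hw1 : (0 : ℝ) ≤ ε ^ 2 := sq_nonneg ε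
  have hw2 : (0 : ℝ) ≤ ε / 2 := by linarith
  have hw4 : (0 : ℝ) ≤ 1 - ε ^ 2 - ε := by nlinarith
  -- closed form for the revenue
  have hrev : ∀ a b c : ℝ, rev μ a b c =
      ε ^ 2 * pay a b c (1 / ε ^ 2) (1 / ε ^ 2) + ε / 2 * pay a b c (1 / ε) 0 +
        ε / 2 * pay a b c 0 (1 / ε) + (1 - ε ^ 2 - ε) * pay a b c 1 1 := by
    intro a b c
    have h := rev_eq hw1 hw2 hw2 hw4 (1 / ε ^ 2, 1 / ε ^ 2) (1 / ε, (0 : ℝ))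
      ((0 : ℝ), 1 / ε) ((1 : ℝ), (1 : ℝ)) a b c
    exact h
  -- Part 1: the asymmetric menu gets at least 5/2 - 3ε
  have part1 : 5 / 2 - 3 * ε ≤ rev μ 1 (1 / ε) (1 / ε ^ 2) := by
    have pA : pay 1 (1 / ε) (1 / ε ^ 2) (1 / ε ^ 2) (1 / ε ^ 2) = 1 / ε ^ 2 :=
      pay_eq_c (by linarith) (by linarith) (by linarith) (by linarith)
    have pB : pay 1 (1 / ε) (1 / ε ^ 2) (1 / ε) 0 = 1 :=
      pay_eq_a (by linarith) (by linarith) (by linarith) (by norm_num)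
    have pC : pay 1 (1 / ε) (1 / ε ^ 2) 0 (1 / ε) = 1 / ε :=
      pay_eq_b (by linarith) (by linarith) (by linarith) (by linarith)
    have pD : pay 1 (1 / ε) (1 / ε ^ 2) 1 1 = 1 :=
      pay_eq_a (by linarith) (by linarith) (by linarith) (by norm_num)
    rw [hrev, pA, pB, pC, pD]
    nlinarith [hse2, hhalf]
  -- Part 2: every symmetric menu gets at most 2 + ε
  have part2 : ∀ p q : ℝ, 0 ≤ p → p ≤ q → rev μ p p q ≤ 2 + ε := by
    intro p q hp hpq
    rw [hrev]
    rcases le_or_gt q 2 with hq2' | hq2'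
    · -- all payments are at most 2
      have b1 : pay p p q (1 / ε ^ 2) (1 / ε ^ 2) ≤ 2 :=
        pay_le (by norm_num) (fun _ _ _ => by linarith) (fun _ _ _ => by linarith)
          (fun _ _ _ => by linarith)
      have b2 : pay p p q (1 / ε) 0 ≤ 2 :=
        pay_le (by norm_num) (fun _ _ _ => by linarith) (fun _ _ _ => by linarith)
          (fun _ _ _ => by linarith)
      have b3 : pay p p q 0 (1 / ε) ≤ 2 :=
        pay_le (by norm_num) (fun _ _ _ => by linarith) (fun _ _ _ => by linarith)
          (fun _ _ _ => by linarith)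
      have b4 : pay p p q 1 1 ≤ 2 :=
        pay_le (by norm_num) (fun _ _ _ => by linarith) (fun _ _ _ => by linarith)
          (fun _ _ _ => by linarith)
      have m1 := mul_le_mul_of_nonneg_left b1 hw1
      have m2 := mul_le_mul_of_nonneg_left b2 hw2
      have m3 := mul_le_mul_of_nonneg_left b3 hw2
      have m4 := mul_le_mul_of_nonneg_left b4 hw4
      linarith
    · rcases le_or_gt p (1 / ε) with hp1 | hp1
      · -- p ≤ 1/ε and q > 2
        have b1 : pay p p q (1 / ε ^ 2) (1 / ε ^ 2) ≤ 1 / ε ^ 2 + p :=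
          pay_le (by linarith) (fun h _ _ => by linarith) (fun h _ _ => by linarith)
            (fun _ h _ => by linarith)
        have b2 : pay p p q (1 / ε) 0 ≤ p :=
          pay_le hp (fun _ _ _ => le_refl p) (fun _ _ _ => le_refl p)
            (fun _ h _ => by linarith)
        have b3 : pay p p q 0 (1 / ε) ≤ p :=
          pay_le hp (fun _ _ _ => le_refl p) (fun _ _ _ => le_refl p)
            (fun _ _ h => by linarith)
        have m1 := mul_le_mul_of_nonneg_left b1 hw1
        have m2 := mul_le_mul_of_nonneg_left b2 hw2
        have m3 := mul_le_mul_of_nonneg_left b3 hw2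
        have k1 : ε ^ 2 * (1 / ε ^ 2 + p) = 1 + ε ^ 2 * p := by
          field_simp
        have hep : ε * p ≤ 1 := by
          calc ε * p ≤ ε * (1 / ε) := mul_le_mul_of_nonneg_left hp1 hε.le
          _ = 1 := hse
        have he2p : ε ^ 2 * p ≤ ε := by nlinarith [hep, hε.le]
        rcases le_or_gt p 1 with hp2 | hp2
        · -- additionally p ≤ 1 : buyer at (1,1) pays at most p
          have b4 : pay p p q 1 1 ≤ p :=
            pay_le hp (fun _ _ _ => le_refl p) (fun _ _ _ => le_refl p)
              (fun h _ _ => by linarith)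
          have m4 := mul_le_mul_of_nonneg_left b4 hw4
          nlinarith [m1, m2, m3, m4, k1]
        · -- additionally p > 1 : buyer at (1,1) pays nothing
          have b4 : pay p p q 1 1 ≤ 0 :=
            pay_le (le_refl 0) (fun h _ _ => by linarith) (fun h _ _ => by linarith)
              (fun h _ _ => by linarith)
          have m4 := mul_le_mul_of_nonneg_left b4 hw4
          nlinarith [m1, m2, m3, m4, k1, hep, he2p]
      · -- p > 1/ε : only the big point can pay, and at most 2/ε²
        have hq2'' : 2 < q := by linarith
        have b1 : pay p p q (1 / ε ^ 2) (1 / ε ^ 2) ≤ 2 * (1 / ε ^ 2) :=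
          pay_le (by linarith) (fun h _ _ => by linarith) (fun h _ _ => by linarith)
            (fun h _ _ => by linarith)
        have b2 : pay p p q (1 / ε) 0 ≤ 0 :=
          pay_le (le_refl 0) (fun h _ _ => by linarith) (fun h _ _ => by linarith)
            (fun h _ _ => by linarith)
        have b3 : pay p p q 0 (1 / ε) ≤ 0 :=
          pay_le (le_refl 0) (fun h _ _ => by linarith) (fun h _ _ => by linarith)
            (fun h _ _ => by linarith)
        have b4 : pay p p q 1 1 ≤ 0 :=
          pay_le (le_refl 0) (fun h _ _ => by linarith) (fun h _ _ => by linarith)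
            (fun h _ _ => by linarith)
        have m1 := mul_le_mul_of_nonneg_left b1 hw1
        have m2 := mul_le_mul_of_nonneg_left b2 hw2
        have m3 := mul_le_mul_of_nonneg_left b3 hw2
        have m4 := mul_le_mul_of_nonneg_left b4 hw4
        have k2 : ε ^ 2 * (2 * (1 / ε ^ 2)) = 2 := by field_simp
        linarith
  refine ⟨part1, part2, ?_⟩
  -- Part 3: comparing the suprema
  set S : Set ℝ := {r : ℝ | ∃ p q : ℝ, 0 ≤ p ∧ p ≤ q ∧ r = rev μ p p q} with hS
  set T : Set ℝ := {r : ℝ | ∃ a b c : ℝ, 0 ≤ a ∧ 0 ≤ b ∧ max a b ≤ c ∧ r = rev μ a b c}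
    with hT
  have hTbdd : ∀ r ∈ T, r ≤ 6 := by
    rintro r ⟨a, b, c, _, _, _, rfl⟩
    rw [hrev]
    have c1 : pay a b c (1 / ε ^ 2) (1 / ε ^ 2) ≤ 1 / ε ^ 2 + 1 / ε ^ 2 :=
      pay_le (by linarith) (fun h _ _ => by linarith) (fun h _ _ => by linarith)
        (fun h _ _ => by linarith)
    have c2 : pay a b c (1 / ε) 0 ≤ 1 / ε :=
      pay_le (by linarith) (fun h _ _ => by linarith) (fun h _ _ => by linarith)
        (fun h _ _ => by linarith)
    have c3 : pay a b c 0 (1 / ε) ≤ 1 / ε :=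
      pay_le (by linarith) (fun h _ _ => by linarith) (fun h _ _ => by linarith)
        (fun h _ _ => by linarith)
    have c4 : pay a b c 1 1 ≤ 2 :=
      pay_le (by norm_num) (fun h _ _ => by linarith) (fun h _ _ => by linarith)
        (fun h _ _ => by linarith)
    have m1 := mul_le_mul_of_nonneg_left c1 hw1
    have m2 := mul_le_mul_of_nonneg_left c2 hw2
    have m3 := mul_le_mul_of_nonneg_left c3 hw2
    have m4 := mul_le_mul_of_nonneg_left c4 hw4
    have k3 : ε ^ 2 * (1 / ε ^ 2 + 1 / ε ^ 2) = 2 := by field_simp; ring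
    linarith
  have hTmem : rev μ 1 (1 / ε) (1 / ε ^ 2) ∈ T := by
    refine ⟨1, 1 / ε, 1 / ε ^ 2, by norm_num, by linarith, ?_, rfl⟩
    exact max_le (by linarith) (by linarith)
  have hTle : rev μ 1 (1 / ε) (1 / ε ^ 2) ≤ sSup T :=
    le_csSup ⟨6, fun r hr => hTbdd r hr⟩ hTmem
  have hSmem : rev μ 0 0 0 ∈ S := ⟨0, 0, le_refl 0, le_refl 0, rfl⟩
  have hSle : sSup S ≤ 2 + ε := by
    apply csSup_le ⟨_, hSmem⟩
    rintro r ⟨p, q, hp, hpq, rfl⟩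
    exact part2 p q hp hpq
  calc sSup S ≤ 2 + ε := hSle
    _ < 5 / 2 - 3 * ε := by linarith
    _ ≤ rev μ 1 (1 / ε) (1 / ε ^ 2) := part1
    _ ≤ sSup T := hTle
end
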